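/- For a classical-quantum channel W^E : X → density matrices, a pmf p, and a rate R, define e_ψ(R) = max_{0≤s≤1}[sR − ψ(s|W^E,p)] and e_φ(R) = max_{0≤s≤1}[(s/2)R − ((1+s)/2)φ(s/(1+s)|W^E,p)]. Then (1/2)·e_ψ(R) ≤ e_φ(R) ≤ e_ψ(R). -/

import Mathlib

open Matrix
open scoped ComplexOrder Kronecker

noncomputable def mpow {n : Type*} [Fintype n] [DecidableEq n]
    (A : Matrix n n ℂ) (s : ℝ) : Matrix n n ℂ :=
  cfc (fun x : ℝ => x ^ s) A

noncomputable def mlog {n : Type*} [Fintype n] [DecidableEq n]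
    (A : Matrix n n ℂ) : Matrix n n ℂ :=
  cfc Real.log A

/-- `ψ(s|W,p) = log ∑_x p(x) Tr[W_x^{1+s} W_p^{-s}]`. -/
noncomputable def psiF {X : Type*} [Fintype X] {d : ℕ}
    (W : X → Matrix (Fin d) (Fin d) ℂ) (p : X → ℝ) (s : ℝ) : ℝ :=
  Real.log (∑ x, p x *
    (Matrix.trace (mpow (W x) (1+s) * mpow (∑ x, (p x : ℂ) • W x) (-s))).re)

/-- `φ(s|W,p) = log Tr[(∑_x p(x) W_x^{1/(1-s)})^{1-s}]`. -/
noncomputable def phiF {X : Type*} [Fintype X] {d : ℕ}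
    (W : X → Matrix (Fin d) (Fin d) ℂ) (p : X → ℝ) (s : ℝ) : ℝ :=
  Real.log ((Matrix.trace (mpow (∑ x, (p x : ℂ) • mpow (W x) (1/(1-s))) (1-s))).re)

/-!
Write `σ = W_p = ∑ₓ p(x) Wₓ` and `K = ∑ₓ p(x) Wₓ^{1+s}`, so that `ψ(s) = log Tr K σ^{-s}` and
`φ(s/(1+s)) = log Tr K^{1/(1+s)}`. For Hermitian `A`, `B` with eigenbases `(uᵢ)`, `(vⱼ)`,
`Tr f(A) g(B) = ∑ᵢⱼ f(aᵢ) g(bⱼ) |⟨uᵢ, vⱼ⟩|²` and the overlap matrix is doubly stochastic, so the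
scalar Hölder inequality turns into trace inequalities for non-commuting matrices:
`(Tr A^{1/(1+s)})^{1+s} ≤ Tr(A B^{-s}) (Tr B)^s` and `Tr A^θ B^{1-θ} ≤ (Tr A)^θ (Tr B)^{1-θ}`.
The first gives `(1+s) φ(s/(1+s)) ≤ ψ(s)` and, applied to each `Wₓ^{1+s}`, also `ψ ≥ 0`.
For `ψ(s/2) ≤ (1+s)/2 · φ(s/(1+s))`, Cauchy–Schwarz for the trace inner product weighted by
`T = K^{s/(1+s)}` bounds `Tr(∑ₓ p(x) Wₓ^{1+s/2}) σ^{-s/2}` by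
`(Tr σ^{1-s} T)^{1/2} (Tr K T⁻¹)^{1/2}`, and the second inequality bounds `Tr σ^{1-s} T`
by `(Tr K^{1/(1+s)})^s`. Both exponent comparisons then hold termwise in `s`.
-/

namespace Matrix

section Overlap

variable {n : Type*} [Fintype n] [DecidableEq n] {A B : Matrix n n ℂ}

namespace IsHermitian

noncomputable def eigenOverlap (hA : A.IsHermitian) (hB : B.IsHermitian) (i j : n) : ℝ :=
  Complex.normSq (((star hA.eigenvectorUnitary * hB.eigenvectorUnitary :
    unitary (Matrix n n ℂ)) : Matrix n n ℂ) i j)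

variable (hA : A.IsHermitian) (hB : B.IsHermitian)

lemma eigenOverlap_nonneg (i j : n) : 0 ≤ hA.eigenOverlap hB i j := Complex.normSq_nonneg _

lemma sum_eigenOverlap_right (i : n) : ∑ j, hA.eigenOverlap hB i j = 1 := by
  have h := congr_fun (congr_fun (Unitary.coe_mul_star_self
    (star hA.eigenvectorUnitary * hB.eigenvectorUnitary)) i) i
  rw [mul_apply, one_apply_eq] at h
  exact_mod_cast (by simpa only [eigenOverlap, Unitary.coe_star, star_apply, Complex.star_def,
    Complex.mul_conj, Complex.ofReal_sum] using h : ((∑ j, hA.eigenOverlap hB i j : ℝ) : ℂ) = 1)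

lemma sum_eigenOverlap_left (j : n) : ∑ i, hA.eigenOverlap hB i j = 1 := by
  have h := congr_fun (congr_fun (Unitary.coe_star_mul_self
    (star hA.eigenvectorUnitary * hB.eigenvectorUnitary)) j) j
  rw [mul_apply, one_apply_eq] at h
  exact_mod_cast (by simpa only [eigenOverlap, Unitary.coe_star, star_apply, Complex.star_def,
    Complex.conj_mul', Complex.ofReal_sum, Complex.normSq_eq_norm_sq, Complex.ofReal_pow] using h :
    ((∑ i, hA.eigenOverlap hB i j : ℝ) : ℂ) = 1)

lemma sum_eigenOverlap_mul_fst (f : n → ℝ) :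
    ∑ q : n × n, hA.eigenOverlap hB q.1 q.2 * f q.1 = ∑ i, f i := by
  simp only [Fintype.sum_prod_type, ← Finset.sum_mul, hA.sum_eigenOverlap_right, one_mul]

lemma sum_eigenOverlap_mul_snd (g : n → ℝ) :
    ∑ q : n × n, hA.eigenOverlap hB q.1 q.2 * g q.2 = ∑ j, g j := by
  rw [Fintype.sum_prod_type, Finset.sum_comm]
  simp only [← Finset.sum_mul, hA.sum_eigenOverlap_left, one_mul]

lemma trace_cfc_mul_cfc (f g : ℝ → ℝ) :
    trace (cfc f A * cfc g B) = ((∑ i, ∑ j,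
      f (hA.eigenvalues i) * g (hB.eigenvalues j) * hA.eigenOverlap hB i j : ℝ) : ℂ) := by
  rw [hA.cfc_eq, hB.cfc_eq, IsHermitian.cfc, IsHermitian.cfc, Unitary.conjStarAlgAut_apply,
    Unitary.conjStarAlgAut_apply]
  set U : Matrix n n ℂ := (hA.eigenvectorUnitary : Matrix n n ℂ)
  set V : Matrix n n ℂ := (hB.eigenvectorUnitary : Matrix n n ℂ)
  set M : Matrix n n ℂ := ((star hA.eigenvectorUnitary * hB.eigenvectorUnitary :
    unitary (Matrix n n ℂ)) : Matrix n n ℂ) with hM_def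
  have hM : M = star U * V := by simp [M, U, V]
  calc trace (U * diagonal (RCLike.ofReal ∘ f ∘ hA.eigenvalues) * star U *
        (V * diagonal (RCLike.ofReal ∘ g ∘ hB.eigenvalues) * star V))
      = trace (U * (diagonal (RCLike.ofReal ∘ f ∘ hA.eigenvalues) * star U * V *
          diagonal (RCLike.ofReal ∘ g ∘ hB.eigenvalues) * star V)) := by simp only [mul_assoc]
    _ = trace (diagonal (RCLike.ofReal ∘ f ∘ hA.eigenvalues) * M *
          diagonal (RCLike.ofReal ∘ g ∘ hB.eigenvalues) * star M) := by
      rw [trace_mul_comm, hM, star_mul, star_star]; simp only [mul_assoc]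
    _ = _ := by
      rw [show diagonal (RCLike.ofReal ∘ f ∘ hA.eigenvalues) * M *
          diagonal (RCLike.ofReal ∘ g ∘ hB.eigenvalues) =
          of fun i j => (f (hA.eigenvalues i) : ℂ) * M i j * g (hB.eigenvalues j) by
        ext i j; rw [mul_diagonal, diagonal_mul]; rfl]
      simp only [trace, diag_apply, mul_apply, of_apply, star_apply, Complex.ofReal_sum]
      refine Finset.sum_congr rfl fun i _ => Finset.sum_congr rfl fun j _ => ?_
      rw [eigenOverlap, ← hM_def, Complex.ofReal_mul, Complex.normSq_eq_conj_mul_self,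
        Complex.star_def]
      push_cast
      ring

lemma re_trace_cfc_mul_cfc (f g : ℝ → ℝ) :
    (trace (cfc f A * cfc g B)).re = ∑ q : n × n,
      hA.eigenOverlap hB q.1 q.2 * f (hA.eigenvalues q.1) * g (hB.eigenvalues q.2) := by
  rw [hA.trace_cfc_mul_cfc hB, Complex.ofReal_re, Fintype.sum_prod_type]
  exact Finset.sum_congr rfl fun i _ => Finset.sum_congr rfl fun j _ => by ring

lemma trace_cfc (f : ℝ → ℝ) : trace (cfc f A) = ((∑ i, f (hA.eigenvalues i) : ℝ) : ℂ) := by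
  have h := hA.trace_cfc_mul_cfc hA f (fun _ => 1)
  rw [cfc_const_one ℝ A, mul_one] at h
  simp only [h, mul_one, ← Finset.mul_sum, hA.sum_eigenOverlap_right]

lemma re_trace_eq_sum_eigenvalues : (trace A).re = ∑ i, hA.eigenvalues i := by
  simp [hA.trace_eq_sum_eigenvalues]

end IsHermitian

end Overlap

section Mpow

variable {n : Type*} [Fintype n] [DecidableEq n] {A : Matrix n n ℂ}

lemma isHermitian_mpow (A : Matrix n n ℂ) (a : ℝ) : (mpow A a).IsHermitian :=
  cfc_predicate _ A

lemma IsHermitian.mpow_zero (hA : A.IsHermitian) : mpow A 0 = 1 := by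
  simp only [mpow, Real.rpow_zero]
  exact cfc_const_one ℝ A

lemma IsHermitian.mpow_one (hA : A.IsHermitian) : mpow A 1 = A := by
  simp only [mpow, Real.rpow_one]
  exact cfc_id' ℝ A

lemma PosSemidef.nonneg_of_mem_spectrum (hA : A.PosSemidef) {x : ℝ} (hx : x ∈ spectrum ℝ A) :
    0 ≤ x := by
  obtain ⟨i, rfl⟩ := hA.isHermitian.spectrum_real_eq_range_eigenvalues ▸ hx
  exact hA.eigenvalues_nonneg i

lemma PosDef.pos_of_mem_spectrum (hA : A.PosDef) {x : ℝ} (hx : x ∈ spectrum ℝ A) : 0 < x := by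
  obtain ⟨i, rfl⟩ := hA.isHermitian.spectrum_real_eq_range_eigenvalues ▸ hx
  exact hA.eigenvalues_pos i

lemma PosSemidef.mpow_mul_mpow (hA : A.PosSemidef) {a b : ℝ} (hab : a + b ≠ 0) :
    mpow A a * mpow A b = mpow A (a + b) := by
  rw [mpow, mpow, ← cfc_mul _ _ A (A.finite_real_spectrum.continuousOn _)
    (A.finite_real_spectrum.continuousOn _)]
  exact cfc_congr fun x hx => (Real.rpow_add' (hA.nonneg_of_mem_spectrum hx) hab).symm

lemma PosDef.mpow_mul_mpow (hA : A.PosDef) (a b : ℝ) :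
    mpow A a * mpow A b = mpow A (a + b) := by
  rw [mpow, mpow, ← cfc_mul _ _ A (A.finite_real_spectrum.continuousOn _)
    (A.finite_real_spectrum.continuousOn _)]
  exact cfc_congr fun x hx => (Real.rpow_add (hA.pos_of_mem_spectrum hx) a b).symm

lemma PosSemidef.mpow_mpow (hA : A.PosSemidef) (a b : ℝ) :
    mpow (mpow A a) b = mpow A (a * b) := by
  rw [mpow, mpow, mpow, ← cfc_comp _ _ A hA.isHermitian.isSelfAdjoint
    ((A.finite_real_spectrum.image _).continuousOn _) (A.finite_real_spectrum.continuousOn _)]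
  exact cfc_congr fun x hx => (Real.rpow_mul (hA.nonneg_of_mem_spectrum hx) a b).symm

lemma PosSemidef.posSemidef_mpow (hA : A.PosSemidef) (a : ℝ) : (mpow A a).PosSemidef := by
  open scoped MatrixOrder in
  exact nonneg_iff_posSemidef.mp
    (cfc_nonneg fun x hx => Real.rpow_nonneg (hA.nonneg_of_mem_spectrum hx) a)

lemma PosDef.posDef_mpow (hA : A.PosDef) (a : ℝ) : (mpow A a).PosDef := by
  refine (hA.posSemidef.posSemidef_mpow a).posDef_iff_isUnit.mpr
    (IsUnit.of_mul_eq_one (mpow A (-a)) ?_)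
  rw [hA.mpow_mul_mpow, add_neg_cancel, hA.isHermitian.mpow_zero]

end Mpow

end Matrix

namespace Real

lemma sum_rpow_mul_rpow_le {ι : Type*} (s : Finset ι) {θ : ℝ} (h0 : 0 ≤ θ) (h1 : θ ≤ 1)
    {u v : ι → ℝ} (hu : ∀ i ∈ s, 0 ≤ u i) (hv : ∀ i ∈ s, 0 ≤ v i) :
    ∑ i ∈ s, u i ^ θ * v i ^ (1 - θ) ≤ (∑ i ∈ s, u i) ^ θ * (∑ i ∈ s, v i) ^ (1 - θ) := by
  rcases h0.eq_or_lt with rfl | h0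
  · simp
  rcases h1.eq_or_lt with rfl | h1
  · simp
  have h1' : 0 < 1 - θ := sub_pos.mpr h1
  convert inner_le_Lp_mul_Lq_of_nonneg s (HolderConjugate.inv_one_sub_inv h0 h1)
    (fun i hi => rpow_nonneg (hu i hi) θ) (fun i hi => rpow_nonneg (hv i hi) (1 - θ)) using 3
  · exact Finset.sum_congr rfl fun i hi => (rpow_rpow_inv (hu i hi) h0.ne').symm
  · rw [one_div, inv_inv]
  · exact Finset.sum_congr rfl fun i hi => (rpow_rpow_inv (hv i hi) h1'.ne').symm
  · rw [one_div, inv_inv]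

lemma sum_mul_rpow_mul_rpow_le {ι : Type*} (s : Finset ι) {θ : ℝ} (h0 : 0 ≤ θ) (h1 : θ ≤ 1)
    {w u v : ι → ℝ} (hw : ∀ i ∈ s, 0 ≤ w i) (hu : ∀ i ∈ s, 0 ≤ u i) (hv : ∀ i ∈ s, 0 ≤ v i) :
    ∑ i ∈ s, w i * u i ^ θ * v i ^ (1 - θ) ≤
      (∑ i ∈ s, w i * u i) ^ θ * (∑ i ∈ s, w i * v i) ^ (1 - θ) := by
  refine le_of_eq_of_le (Finset.sum_congr rfl fun i hi => ?_) (sum_rpow_mul_rpow_le s h0 h1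
    (fun i hi => mul_nonneg (hw i hi) (hu i hi)) (fun i hi => mul_nonneg (hw i hi) (hv i hi)))
  rw [mul_rpow (hw i hi) (hu i hi), mul_rpow (hw i hi) (hv i hi)]
  calc w i * u i ^ θ * v i ^ (1 - θ) = w i ^ (θ + (1 - θ)) * u i ^ θ * v i ^ (1 - θ) := by
        rw [add_sub_cancel, rpow_one]
    _ = _ := by rw [rpow_add' (hw i hi) (by norm_num)]; ring

end Real

namespace Matrix

section TraceInequalities

variable {n : Type*} [Fintype n]

lemma nonempty_of_trace_ne_zero {A : Matrix n n ℂ} (h : trace A ≠ 0) : Nonempty n := by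
  by_contra hn
  rw [not_nonempty_iff] at hn
  exact h (by simp [trace])

lemma PosSemidef.re_trace_nonneg {A : Matrix n n ℂ} (hA : A.PosSemidef) : 0 ≤ (trace A).re :=
  (Complex.nonneg_iff.mp hA.trace_nonneg).1

lemma PosDef.re_trace_pos [Nonempty n] {A : Matrix n n ℂ} (hA : A.PosDef) : 0 < (trace A).re :=
  (Complex.pos_iff.mp hA.trace_pos).1

lemma PosSemidef.mulVec_eq_zero_of_sum {ι : Type*} [Fintype ι] {B : ι → Matrix n n ℂ}
    (hB : ∀ i, (B i).PosSemidef) {v : n → ℂ} (hv : (∑ i, B i) *ᵥ v = 0) (i : ι) :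
    B i *ᵥ v = 0 := by
  have hsum : ∑ j, star v ⬝ᵥ (B j *ᵥ v) = 0 := by
    rw [← dotProduct_sum, ← sum_mulVec, hv, dotProduct_zero]
  rw [← (hB i).dotProduct_mulVec_zero_iff]
  exact (Finset.sum_eq_zero_iff_of_nonneg fun j _ => (hB j).dotProduct_mulVec_nonneg v).mp hsum i
    (Finset.mem_univ i)

variable [DecidableEq n] {A B W S T : Matrix n n ℂ}

lemma PosSemidef.re_trace_mul_nonneg (hA : A.PosSemidef) (hB : B.PosSemidef) :
    0 ≤ (trace (A * B)).re := by
  rw [← cfc_id' ℝ A hA.isHermitian.isSelfAdjoint, ← cfc_id' ℝ B hB.isHermitian.isSelfAdjoint,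
    hA.isHermitian.re_trace_cfc_mul_cfc hB.isHermitian]
  exact Finset.sum_nonneg fun q _ => mul_nonneg (mul_nonneg
    (hA.isHermitian.eigenOverlap_nonneg _ _ _) (hA.eigenvalues_nonneg _))
    (hB.eigenvalues_nonneg _)

lemma PosSemidef.re_trace_mpow_mul_mpow_le (hA : A.PosSemidef) (hB : B.PosSemidef) {θ : ℝ}
    (h0 : 0 ≤ θ) (h1 : θ ≤ 1) :
    (trace (mpow A θ * mpow B (1 - θ))).re ≤ (trace A).re ^ θ * (trace B).re ^ (1 - θ) := by
  have hA' := hA.isHermitian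
  have hB' := hB.isHermitian
  calc (trace (mpow A θ * mpow B (1 - θ))).re
      = ∑ q : n × n, hA'.eigenOverlap hB' q.1 q.2 * hA'.eigenvalues q.1 ^ θ *
          hB'.eigenvalues q.2 ^ (1 - θ) := hA'.re_trace_cfc_mul_cfc hB' _ _
    _ ≤ (∑ q : n × n, hA'.eigenOverlap hB' q.1 q.2 * hA'.eigenvalues q.1) ^ θ *
          (∑ q : n × n, hA'.eigenOverlap hB' q.1 q.2 * hB'.eigenvalues q.2) ^ (1 - θ) :=
      Real.sum_mul_rpow_mul_rpow_le _ h0 h1 (fun q _ => hA'.eigenOverlap_nonneg hB' q.1 q.2)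
        (fun q _ => hA.eigenvalues_nonneg q.1) (fun q _ => hB.eigenvalues_nonneg q.2)
    _ = (trace A).re ^ θ * (trace B).re ^ (1 - θ) := by
      rw [hA'.sum_eigenOverlap_mul_fst, hA'.sum_eigenOverlap_mul_snd,
        hA'.re_trace_eq_sum_eigenvalues, hB'.re_trace_eq_sum_eigenvalues]

lemma PosSemidef.re_trace_mpow_rpow_le (hA : A.PosSemidef) (hB : B.PosDef) {s : ℝ}
    (hs : 0 ≤ s) :
    (trace (mpow A (1 / (1 + s)))).re ^ (1 + s) ≤
      (trace (A * mpow B (-s))).re * (trace B).re ^ s := by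
  have hA' := hA.isHermitian
  have hB' := hB.isHermitian
  set θ := 1 / (1 + s) with hθ
  have hs1 : 0 < 1 + s := by linarith
  have hθ0 : 0 ≤ θ := by positivity
  have hθ1 : θ ≤ 1 := div_le_one_of_le₀ (by linarith) hs1.le
  have hpt : ∀ q : n × n, hA'.eigenvalues q.1 ^ θ = (hA'.eigenvalues q.1 *
      hB'.eigenvalues q.2 ^ (-s)) ^ θ * hB'.eigenvalues q.2 ^ (1 - θ) := by
    intro q
    have hb := hB.eigenvalues_pos q.2
    rw [Real.mul_rpow (hA.eigenvalues_nonneg q.1) (Real.rpow_nonneg hb.le _), mul_assoc,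
      ← Real.rpow_mul hb.le, ← Real.rpow_add hb, show -s * θ + (1 - θ) = 0 by
        rw [hθ]; field_simp; ring, Real.rpow_zero, mul_one]
  set X := ∑ q : n × n, hA'.eigenOverlap hB' q.1 q.2 *
    (hA'.eigenvalues q.1 * hB'.eigenvalues q.2 ^ (-s))
  have hX : (trace (A * mpow B (-s))).re = X := by
    conv_lhs => rw [← cfc_id' ℝ A, mpow, hA'.re_trace_cfc_mul_cfc hB']
    exact Finset.sum_congr rfl fun q _ => by simp only [mul_assoc]
  have hX0 : 0 ≤ X := Finset.sum_nonneg fun q _ => mul_nonneg (hA'.eigenOverlap_nonneg hB' _ _)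
    (mul_nonneg (hA.eigenvalues_nonneg q.1) (Real.rpow_nonneg (hB.eigenvalues_pos q.2).le _))
  have hHolder : (trace (mpow A θ)).re ≤ X ^ θ * (trace B).re ^ (1 - θ) := calc
    (trace (mpow A θ)).re
        = ∑ q : n × n, hA'.eigenOverlap hB' q.1 q.2 * (hA'.eigenvalues q.1 *
            hB'.eigenvalues q.2 ^ (-s)) ^ θ * hB'.eigenvalues q.2 ^ (1 - θ) := by
      rw [mpow, hA'.trace_cfc, Complex.ofReal_re, ← hA'.sum_eigenOverlap_mul_fst hB']
      exact Finset.sum_congr rfl fun q _ => by rw [hpt q, mul_assoc]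
    _ ≤ X ^ θ * (∑ q : n × n, hA'.eigenOverlap hB' q.1 q.2 * hB'.eigenvalues q.2) ^ (1 - θ) :=
      Real.sum_mul_rpow_mul_rpow_le _ hθ0 hθ1 (fun q _ => hA'.eigenOverlap_nonneg hB' q.1 q.2)
        (fun q _ => mul_nonneg (hA.eigenvalues_nonneg q.1)
          (Real.rpow_nonneg (hB.eigenvalues_pos q.2).le _))
        (fun q _ => (hB.eigenvalues_pos q.2).le)
    _ = X ^ θ * (trace B).re ^ (1 - θ) := by
      rw [hA'.sum_eigenOverlap_mul_snd, hB'.re_trace_eq_sum_eigenvalues]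
  have hB0 : 0 ≤ (trace B).re := hB.posSemidef.re_trace_nonneg
  calc (trace (mpow A θ)).re ^ (1 + s) ≤ (X ^ θ * (trace B).re ^ (1 - θ)) ^ (1 + s) :=
        Real.rpow_le_rpow (hA.posSemidef_mpow θ).re_trace_nonneg hHolder hs1.le
    _ = (trace (A * mpow B (-s))).re * (trace B).re ^ s := by
      rw [Real.mul_rpow (by positivity) (by positivity), ← Real.rpow_mul hX0,
        ← Real.rpow_mul hB0, hX, hθ, one_div_mul_cancel hs1.ne', Real.rpow_one]
      congr 2
      field_simp
      ring

lemma PosSemidef.one_le_re_trace_mpow_mul_mpow_neg (hA : A.PosSemidef) (hA1 : trace A = 1)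
    (hB : B.PosDef) (hB1 : trace B = 1) {s : ℝ} (hs : 0 ≤ s) :
    1 ≤ (trace (mpow A (1 + s) * mpow B (-s))).re := by
  have h := (hA.posSemidef_mpow (1 + s)).re_trace_mpow_rpow_le hB hs
  rwa [hA.mpow_mpow, mul_one_div_cancel (by positivity), hA.isHermitian.mpow_one, hA1, hB1,
    Complex.one_re, Real.one_rpow, Real.one_rpow, mul_one] at h

/-- Cauchy–Schwarz for `⟪x, y⟫ = Tr(y T xᴴ)`, applied to `x = Yᴴ T⁻¹` and `y = Xᴴ`. -/
lemma PosDef.re_trace_conjTranspose_mul_le_sqrt_mul_sqrt (hT : T.PosDef)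
    (X Y : Matrix n n ℂ) :
    (trace (Xᴴ * Y)).re ≤ √(trace (Xᴴ * T * X)).re * √(trace (Yᴴ * T⁻¹ * Y)).re := by
  let _ := T.toMatrixSeminormedAddCommGroup hT.posSemidef
  let _ := T.toMatrixInnerProductSpace hT.posSemidef
  have hinv : T * T⁻¹ = 1 := mul_nonsing_inv T ((isUnit_iff_isUnit_det T).mp hT.isUnit)
  have hTinv : (T⁻¹)ᴴ = T⁻¹ := by rw [conjTranspose_nonsing_inv, hT.isHermitian.eq]
  have key := re_inner_le_norm (𝕜 := ℂ) (Yᴴ * T⁻¹) Xᴴ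
  rw [norm_eq_sqrt_re_inner (𝕜 := ℂ), norm_eq_sqrt_re_inner (𝕜 := ℂ)] at key
  change (trace (Xᴴ * T * (Yᴴ * T⁻¹)ᴴ)).re ≤ √(trace (Yᴴ * T⁻¹ * T * (Yᴴ * T⁻¹)ᴴ)).re *
    √(trace (Xᴴ * T * Xᴴᴴ)).re at key
  rw [conjTranspose_mul, hTinv, conjTranspose_conjTranspose, conjTranspose_conjTranspose] at key
  rw [mul_comm]
  convert key using 3
  · rw [mul_assoc, ← mul_assoc T, hinv, one_mul]
  · rw [mul_assoc (Yᴴ * T⁻¹), ← mul_assoc T, hinv, one_mul, mul_assoc]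

lemma PosSemidef.re_trace_mpow_mul_le_sqrt_mul_sqrt (hW : W.PosSemidef) (hS : S.IsHermitian)
    (hT : T.PosDef) {s : ℝ} (hs : 0 ≤ s) :
    (trace (mpow W (1 + s / 2) * S)).re ≤
      √(trace (W * (S * T * S))).re * √(trace (mpow W (1 + s) * T⁻¹)).re := by
  have key := hT.re_trace_conjTranspose_mul_le_sqrt_mul_sqrt (S * mpow W (1 / 2))
    (mpow W ((1 + s) / 2))
  rw [conjTranspose_mul, (isHermitian_mpow W _).eq, (isHermitian_mpow W _).eq, hS.eq] at key
  have h1 : trace (mpow W (1 / 2) * S * mpow W ((1 + s) / 2)) =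
      trace (mpow W (1 + s / 2) * S) := by
    rw [trace_mul_cycle, hW.mpow_mul_mpow (by positivity),
      show (1 + s) / 2 + 1 / 2 = 1 + s / 2 by ring]
  have h2 : trace (mpow W (1 / 2) * S * T * (S * mpow W (1 / 2))) = trace (W * (S * T * S)) := by
    rw [show mpow W (1 / 2) * S * T * (S * mpow W (1 / 2)) =
      mpow W (1 / 2) * (S * T * S) * mpow W (1 / 2) by simp only [mul_assoc], trace_mul_cycle,
      hW.mpow_mul_mpow (by norm_num), add_halves, hW.isHermitian.mpow_one]
  have h3 : trace (mpow W ((1 + s) / 2) * T⁻¹ * mpow W ((1 + s) / 2)) =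
      trace (mpow W (1 + s) * T⁻¹) := by
    rw [trace_mul_cycle, hW.mpow_mul_mpow (by positivity), add_halves]
  rwa [h1, h2, h3] at key

end TraceInequalities

end Matrix

/-- `mixture W p` is the paper's `W_p`; `mixture (fun x => mpow (W x) (1 + s)) p` is the matrix
whose `1/(1+s)`-th power appears in `φ(s/(1+s))`. -/
noncomputable def mixture {X : Type*} [Fintype X] {n : Type*} (W : X → Matrix n n ℂ)
    (p : X → ℝ) : Matrix n n ℂ :=
  ∑ x, (p x : ℂ) • W x

section Mixture

variable {X : Type*} [Fintype X] {n : Type*} {W : X → Matrix n n ℂ} {p : X → ℝ}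

lemma posSemidef_mixture (hW : ∀ x, (W x).PosSemidef) (hp : ∀ x, 0 ≤ p x) :
    (mixture W p).PosSemidef :=
  posSemidef_sum _ fun x _ => (hW x).smul (by exact_mod_cast hp x)

variable [Fintype n]

lemma re_trace_mixture_mul (W : X → Matrix n n ℂ) (p : X → ℝ) (B : Matrix n n ℂ) :
    (trace (mixture W p * B)).re = ∑ x, p x * (trace (W x * B)).re := by
  simp [mixture, Finset.sum_mul, trace_sum]

lemma trace_mixture (hW : ∀ x, trace (W x) = 1) (hp : ∑ x, p x = 1) :
    trace (mixture W p) = 1 := by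
  simp [mixture, trace_sum, hW, ← Complex.ofReal_sum, hp]

variable [DecidableEq n]

/-- Since `Wₓ = Wₓ^{1-a} Wₓ^a`, the kernel of `∑ₓ p(x) Wₓ^a` lies in that of `∑ₓ p(x) Wₓ`. -/
lemma posDef_mixture_mpow (hW : ∀ x, (W x).PosSemidef) (hp : ∀ x, 0 ≤ p x)
    (hσ : (mixture W p).PosDef) (a : ℝ) : (mixture (fun x => mpow (W x) a) p).PosDef := by
  have hK := posSemidef_mixture (fun x => (hW x).posSemidef_mpow a) hp
  refine PosDef.of_dotProduct_mulVec_pos hK.isHermitian fun v hv =>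
    lt_of_le_of_ne (hK.dotProduct_mulVec_nonneg v) fun h => hv ?_
  have hKv := (hK.dotProduct_mulVec_zero_iff v).mp h.symm
  have hterm (x : X) : ((p x : ℂ) • W x) *ᵥ v = 0 := by
    have h0 := PosSemidef.mulVec_eq_zero_of_sum
      (fun x => ((hW x).posSemidef_mpow a).smul (by exact_mod_cast hp x : (0 : ℂ) ≤ p x)) hKv x
    rw [← (hW x).isHermitian.mpow_one, ← sub_add_cancel (1 : ℝ) a,
      ← (hW x).mpow_mul_mpow (by simp), ← mul_smul_comm, ← mulVec_mulVec, h0, mulVec_zero]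
  by_contra hv'
  have := hσ.dotProduct_mulVec_pos hv'
  rw [mixture, sum_mulVec, Finset.sum_eq_zero fun x _ => hterm x, dotProduct_zero] at this
  exact lt_irrefl 0 this

lemma sum_re_trace_mpow_mul_le_sqrt_mul_sqrt {T : Matrix n n ℂ} (hW : ∀ x, (W x).PosSemidef)
    (hp : ∀ x, 0 ≤ p x) (hσ : (mixture W p).PosDef) (hT : T.PosDef) {s : ℝ} (hs : 0 ≤ s) :
    ∑ x, p x * (trace (mpow (W x) (1 + s / 2) * mpow (mixture W p) (-(s / 2)))).re ≤
      √(trace (mpow (mixture W p) (1 - s) * T)).re *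
        √(trace (mixture (fun x => mpow (W x) (1 + s)) p * T⁻¹)).re := by
  set σ := mixture W p
  set S := mpow σ (-(s / 2))
  have hS : S.IsHermitian := isHermitian_mpow σ _
  have hSTS : (S * T * S).PosSemidef := by
    simpa only [hS.eq] using hT.posSemidef.conjTranspose_mul_mul_same S
  have ha (x : X) : 0 ≤ p x * (trace (W x * (S * T * S))).re :=
    mul_nonneg (hp x) ((hW x).re_trace_mul_nonneg hSTS)
  have hb (x : X) : 0 ≤ p x * (trace (mpow (W x) (1 + s) * T⁻¹)).re :=
    mul_nonneg (hp x) (((hW x).posSemidef_mpow _).re_trace_mul_nonneg hT.inv.posSemidef)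
  have hSσS : S * σ * S = mpow σ (1 - s) := calc
    S * σ * S = mpow σ (-(s / 2)) * mpow σ 1 * mpow σ (-(s / 2)) := by
      rw [hσ.isHermitian.mpow_one]
    _ = mpow σ (1 - s) := by
      rw [hσ.mpow_mul_mpow, hσ.mpow_mul_mpow]; ring_nf
  have hσS : trace (σ * (S * T * S)) = trace (mpow σ (1 - s) * T) := by
    rw [← hSσS, ← mul_assoc, ← mul_assoc, trace_mul_comm]
    simp only [mul_assoc]
  calc ∑ x, p x * (trace (mpow (W x) (1 + s / 2) * S)).re
      ≤ ∑ x, √(p x * (trace (W x * (S * T * S))).re) *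
          √(p x * (trace (mpow (W x) (1 + s) * T⁻¹)).re) := by
        refine Finset.sum_le_sum fun x _ => ?_
        rw [Real.sqrt_mul (hp x), Real.sqrt_mul (hp x), mul_mul_mul_comm,
          Real.mul_self_sqrt (hp x)]
        exact mul_le_mul_of_nonneg_left
          ((hW x).re_trace_mpow_mul_le_sqrt_mul_sqrt hS hT hs) (hp x)
    _ ≤ √(∑ x, p x * (trace (W x * (S * T * S))).re) *
          √(∑ x, p x * (trace (mpow (W x) (1 + s) * T⁻¹)).re) :=
        Real.sum_sqrt_mul_sqrt_le _ ha hb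
    _ = _ := by rw [← re_trace_mixture_mul, ← re_trace_mixture_mul, hσS]

lemma sum_re_trace_mpow_mul_mpow_neg_le (hW : ∀ x, (W x).PosSemidef) (hp : ∀ x, 0 ≤ p x)
    (hσ : (mixture W p).PosDef) (hσ1 : trace (mixture W p) = 1) {s : ℝ} (hs0 : 0 ≤ s)
    (hs1 : s ≤ 1) :
    ∑ x, p x * (trace (mpow (W x) (1 + s / 2) * mpow (mixture W p) (-(s / 2)))).re ≤
      (trace (mpow (mixture (fun x => mpow (W x) (1 + s)) p) (1 / (1 + s)))).re ^
        ((1 + s) / 2) := by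
  set K := mixture (fun x => mpow (W x) (1 + s)) p
  set F := (trace (mpow K (1 / (1 + s)))).re
  have hK : K.PosDef := posDef_mixture_mpow hW hp hσ (1 + s)
  have hF : 0 ≤ F := (hK.posSemidef.posSemidef_mpow _).re_trace_nonneg
  have hinv : (mpow K (s / (1 + s)))⁻¹ = mpow K (-(s / (1 + s))) :=
    inv_eq_right_inv (by rw [hK.mpow_mul_mpow, add_neg_cancel, hK.isHermitian.mpow_zero])
  have hσK : (trace (mpow (mixture W p) (1 - s) * mpow K (s / (1 + s)))).re ≤ F ^ s := by
    have h := hσ.posSemidef.re_trace_mpow_mul_mpow_le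
      (hK.posSemidef.posSemidef_mpow (1 / (1 + s))) (θ := 1 - s) (by linarith) (by linarith)
    rwa [hK.posSemidef.mpow_mpow, sub_sub_cancel, hσ1, Complex.one_re, Real.one_rpow, one_mul,
      one_div_mul_eq_div] at h
  have hKK : (trace (K * (mpow K (s / (1 + s)))⁻¹)).re = F := by
    rw [hinv]
    nth_rewrite 1 [← hK.isHermitian.mpow_one]
    rw [hK.mpow_mul_mpow]
    congr 3
    field_simp
    ring
  calc _ ≤ √(trace (mpow (mixture W p) (1 - s) * mpow K (s / (1 + s)))).re *
        √(trace (K * (mpow K (s / (1 + s)))⁻¹)).re :=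
        sum_re_trace_mpow_mul_le_sqrt_mul_sqrt hW hp hσ (hK.posDef_mpow _) hs0
    _ ≤ √(F ^ s) * √F := by rw [hKK]; gcongr
    _ = F ^ ((1 + s) / 2) := by
      rw [Real.sqrt_eq_rpow, Real.sqrt_eq_rpow, ← Real.rpow_mul hF,
        ← Real.rpow_add' hF (by positivity)]
      ring_nf

end Mixture

section Exponents

variable {X : Type*} [Fintype X] {d : ℕ} {W : X → Matrix (Fin d) (Fin d) ℂ} {p : X → ℝ}

lemma psiF_eq_log_sum (s : ℝ) : psiF W p s =
    Real.log (∑ x, p x * (trace (mpow (W x) (1 + s) * mpow (mixture W p) (-s))).re) := rfl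

lemma phiF_div_one_add {s : ℝ} (hs : 1 + s ≠ 0) : phiF W p (s / (1 + s)) =
    Real.log (trace (mpow (mixture (fun x => mpow (W x) (1 + s)) p) (1 / (1 + s)))).re := by
  rw [phiF, show 1 / (1 - s / (1 + s)) = 1 + s by field_simp; ring,
    show 1 - s / (1 + s) = 1 / (1 + s) by field_simp; ring]
  rfl

end Exponents

structure IsFaithfulEnsemble {X : Type*} [Fintype X] {n : Type*} [Fintype n]
    (W : X → Matrix n n ℂ) (p : X → ℝ) : Prop where
  posSemidef : ∀ x, (W x).PosSemidef
  trace_eq_one : ∀ x, (W x).trace = 1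
  nonneg : ∀ x, 0 ≤ p x
  sum_eq_one : ∑ x, p x = 1
  posDef_mixture : (mixture W p).PosDef

namespace IsFaithfulEnsemble

variable {X : Type*} [Fintype X] {n : Type*} [Fintype n] {W : X → Matrix n n ℂ} {p : X → ℝ}

lemma trace_mixture_eq_one (hE : IsFaithfulEnsemble W p) : trace (mixture W p) = 1 :=
  trace_mixture hE.trace_eq_one hE.sum_eq_one

variable [DecidableEq n]

lemma one_le_sum_re_trace (hE : IsFaithfulEnsemble W p) {s : ℝ} (hs : 0 ≤ s) :
    1 ≤ ∑ x, p x * (trace (mpow (W x) (1 + s) * mpow (mixture W p) (-s))).re := calc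
  1 = ∑ x, p x * 1 := by simp [hE.sum_eq_one]
  _ ≤ _ := Finset.sum_le_sum fun x _ => mul_le_mul_of_nonneg_left
    ((hE.posSemidef x).one_le_re_trace_mpow_mul_mpow_neg (hE.trace_eq_one x) hE.posDef_mixture
      hE.trace_mixture_eq_one hs) (hE.nonneg x)

lemma re_trace_mpow_mixture_pos (hE : IsFaithfulEnsemble W p) (s : ℝ) :
    0 < (trace (mpow (mixture (fun x => mpow (W x) (1 + s)) p) (1 / (1 + s)))).re := by
  have := nonempty_of_trace_ne_zero (hE.trace_mixture_eq_one.symm ▸ one_ne_zero)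
  exact ((posDef_mixture_mpow hE.posSemidef hE.nonneg hE.posDef_mixture _).posDef_mpow
    _).re_trace_pos

variable {d : ℕ} {W : X → Matrix (Fin d) (Fin d) ℂ}

lemma psiF_nonneg (hE : IsFaithfulEnsemble W p) {s : ℝ} (hs : 0 ≤ s) : 0 ≤ psiF W p s :=
  Real.log_nonneg (hE.one_le_sum_re_trace hs)

lemma one_add_mul_phiF_le_psiF (hE : IsFaithfulEnsemble W p) {s : ℝ} (hs : 0 ≤ s) :
    (1 + s) * phiF W p (s / (1 + s)) ≤ psiF W p s := by
  have hF := hE.re_trace_mpow_mixture_pos s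
  rw [phiF_div_one_add (by positivity), ← Real.log_rpow hF, psiF_eq_log_sum,
    ← re_trace_mixture_mul]
  refine Real.log_le_log (Real.rpow_pos_of_pos hF _) ?_
  simpa [hE.trace_mixture_eq_one] using (posDef_mixture_mpow hE.posSemidef hE.nonneg
    hE.posDef_mixture (1 + s)).posSemidef.re_trace_mpow_rpow_le hE.posDef_mixture hs

lemma psiF_half_le_phiF (hE : IsFaithfulEnsemble W p) {s : ℝ} (hs0 : 0 ≤ s) (hs1 : s ≤ 1) :
    psiF W p (s / 2) ≤ (1 + s) / 2 * phiF W p (s / (1 + s)) := by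
  have hF := hE.re_trace_mpow_mixture_pos s
  have hG := hE.one_le_sum_re_trace (s := s / 2) (by positivity)
  rw [phiF_div_one_add (by positivity), ← Real.log_rpow hF, psiF_eq_log_sum]
  exact Real.log_le_log (by linarith) (sum_re_trace_mpow_mul_mpow_neg_le hE.posSemidef
    hE.nonneg hE.posDef_mixture hE.trace_mixture_eq_one hs0 hs1)

end IsFaithfulEnsemble

lemma exponent_comparison_of_bounds {ψ φ : ℝ → ℝ} (R : ℝ)
    (hψ : ∀ s ∈ Set.Icc (0 : ℝ) 1, 0 ≤ ψ s)
    (hA : ∀ s ∈ Set.Icc (0 : ℝ) 1, (1 + s) * φ (s / (1 + s)) ≤ ψ s)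
    (hB : ∀ s ∈ Set.Icc (0 : ℝ) 1, ψ (s / 2) ≤ (1 + s) / 2 * φ (s / (1 + s))) :
    (1/2) * sSup ((fun s => s * R - ψ s) '' Set.Icc (0:ℝ) 1)
        ≤ sSup ((fun s => s/2 * R - (1+s)/2 * φ (s/(1+s))) '' Set.Icc (0:ℝ) 1) ∧
    sSup ((fun s => s/2 * R - (1+s)/2 * φ (s/(1+s))) '' Set.Icc (0:ℝ) 1)
        ≤ sSup ((fun s => s * R - ψ s) '' Set.Icc (0:ℝ) 1) := by
  have hne : (Set.Icc (0 : ℝ) 1).Nonempty := Set.nonempty_Icc.mpr zero_le_one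
  have hhalf (s : ℝ) (hs : s ∈ Set.Icc (0 : ℝ) 1) : s / 2 ∈ Set.Icc (0 : ℝ) 1 :=
    ⟨by linarith [hs.1], by linarith [hs.2]⟩
  have hsR (s : ℝ) (hs : s ∈ Set.Icc (0 : ℝ) 1) : s * R ≤ |R| := by
    nlinarith [le_abs_self R, abs_nonneg R, hs.1, hs.2]
  have hφψ (s : ℝ) (hs : s ∈ Set.Icc (0 : ℝ) 1) :
      s / 2 * R - (1 + s) / 2 * φ (s / (1 + s)) ≤ s / 2 * R - ψ (s / 2) := by
    linarith [hB s hs]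
  have hψbdd : BddAbove ((fun s => s * R - ψ s) '' Set.Icc (0:ℝ) 1) := by
    refine ⟨|R|, ?_⟩
    rintro _ ⟨s, hs, rfl⟩
    linarith [hsR s hs, hψ s hs]
  have hφbdd : BddAbove ((fun s => s/2 * R - (1+s)/2 * φ (s/(1+s))) '' Set.Icc (0:ℝ) 1) := by
    refine ⟨|R|, ?_⟩
    rintro _ ⟨s, hs, rfl⟩
    linarith [hφψ s hs, hsR (s / 2) (hhalf s hs), hψ (s / 2) (hhalf s hs)]
  constructor
  · suffices sSup ((fun s => s * R - ψ s) '' Set.Icc (0:ℝ) 1) ≤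
        2 * sSup ((fun s => s/2 * R - (1+s)/2 * φ (s/(1+s))) '' Set.Icc (0:ℝ) 1) by linarith
    refine csSup_le (hne.image _) ?_
    rintro _ ⟨s, hs, rfl⟩
    linarith [hA s hs, le_csSup hφbdd ⟨s, hs, rfl⟩]
  · refine csSup_le (hne.image _) ?_
    rintro _ ⟨s, hs, rfl⟩
    exact (hφψ s hs).trans (le_csSup hψbdd ⟨s / 2, hhalf s hs, rfl⟩)

/-- With `e_ψ(R) = max_{0≤s≤1}[sR − ψ(s|W,p)]` and
`e_φ(R) = max_{0≤s≤1}[(s/2)R − ((1+s)/2)φ(s/(1+s)|W,p)]`,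
we have `(1/2) e_ψ(R) ≤ e_φ(R) ≤ e_ψ(R)`. -/
theorem exponent_comparison {X : Type*} [Fintype X] {d : ℕ}
    (W : X → Matrix (Fin d) (Fin d) ℂ) (p : X → ℝ) (R : ℝ)
    (hW : ∀ x, (W x).PosSemidef) (hWtr : ∀ x, Matrix.trace (W x) = 1)
    (hp : ∀ x, 0 ≤ p x) (hp1 : ∑ x, p x = 1)
    (hWp : (∑ x, (p x : ℂ) • W x).PosDef) :
    (1/2) * sSup ((fun s => s * R - psiF W p s) '' Set.Icc (0:ℝ) 1)
        ≤ sSup ((fun s => s/2 * R - (1+s)/2 * phiF W p (s/(1+s))) '' Set.Icc (0:ℝ) 1) ∧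
    sSup ((fun s => s/2 * R - (1+s)/2 * phiF W p (s/(1+s))) '' Set.Icc (0:ℝ) 1)
        ≤ sSup ((fun s => s * R - psiF W p s) '' Set.Icc (0:ℝ) 1) := by
  have hE : IsFaithfulEnsemble W p := ⟨hW, hWtr, hp, hp1, hWp⟩
  exact exponent_comparison_of_bounds R (fun _ hs => hE.psiF_nonneg hs.1)
    (fun _ hs => hE.one_add_mul_phiF_le_psiF hs.1) (fun _ hs => hE.psiF_half_le_phiF hs.1 hs.2)
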